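/- arXiv:math/0211021 — 2 statements merged into one kernel-verified Lean document; each statement's English description precedes it below -/
import Mathlib

section
/- Let F : ℂ → ℂ be holomorphic on the open unit disk and continuous on the closed disk, with power series F(z) = Σ_{ℓ≥0} a_ℓ z^ℓ. If the boundary values satisfy F(e^{iθ}) = e^{iθ} · conj(F(e^{iθ})) for all θ, then F(z) = a₀ + conj(a₀) z; i.e., F is the affine function z ↦ a + ā z with a = a₀. -/
/-!
Subtracting the affine solution `z ↦ a + ā z` with `a = F 0`, which satisfies the same boundary
condition, leaves a solution `G` with `G 0 = 0`. Writing `G = z H`, the boundary condition says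
exactly that `H = conj G` on the unit circle, so the mean value property for `G H` shows that the
mean of `|G|²` over the circle is `G 0 * H 0 = 0`. Hence `G` vanishes on the circle, and by the
maximum modulus principle on the whole closed disk.
-/

open Complex ComplexConjugate Metric Set Real

theorem eqOn_sphere_zero_of_circleAverage_eq_zero {f : ℂ → ℝ} {c : ℂ} {R : ℝ}
    (hf : ContinuousOn f (sphere c |R|)) (hf_nonneg : ∀ z ∈ sphere c |R|, 0 ≤ f z)
    (havg : circleAverage f c R = 0) : EqOn f 0 (sphere c |R|) := by
  have hmaps : MapsTo (circleMap c R) (Ioc 0 (2 * π)) (sphere c |R|) :=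
    fun θ _ ↦ circleMap_mem_sphere' c R θ
  have hintegral : ∫ θ in (0)..2 * π, f (circleMap c R θ) = 0 := by
    simpa [circleAverage_def, pi_ne_zero] using havg
  rw [intervalIntegral.integral_eq_zero_iff_of_le_of_nonneg_ae two_pi_pos.le
    (MeasureTheory.ae_restrict_of_forall_mem measurableSet_Ioc fun θ hθ ↦ hf_nonneg _ (hmaps hθ))
    hf.circleIntegrable'] at hintegral
  have hzero : EqOn (f ∘ circleMap c R) 0 (Ioc 0 (2 * π)) :=
    MeasureTheory.Measure.eqOn_Ioc_of_ae_eq _ hintegral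
      (hf.comp (continuous_circleMap c R).continuousOn hmaps) continuousOn_const
  rw [← image_circleMap_Ioc]
  rintro _ ⟨θ, hθ, rfl⟩
  exact hzero hθ

theorem DiffContOnCl.dslope_ball {E : Type*} [NormedAddCommGroup E] [NormedSpace ℂ E]
    [CompleteSpace E] {G : ℂ → E} {c : ℂ} {r : ℝ} (hr : 0 < r) (hG : DiffContOnCl ℂ G (ball c r)) :
    DiffContOnCl ℂ (dslope G c) (ball c r) := by
  refine ⟨(differentiableOn_dslope (ball_mem_nhds c hr)).2 hG.differentiableOn, ?_⟩
  rw [closure_ball c hr.ne']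
  exact (continuousOn_dslope (closedBall_mem_nhds c hr)).2
    ⟨closure_ball c hr.ne' ▸ hG.continuousOn, hG.differentiableAt isOpen_ball (mem_ball_self hr)⟩

theorem add_conj_mul_eq_mul_conj (a : ℂ) {z : ℂ} (hz : ‖z‖ = 1) :
    a + conj a * z = z * conj (a + conj a * z) := by
  have hzz : z * conj z = 1 := by rw [mul_conj', hz]; norm_num
  calc a + conj a * z = a * (z * conj z) + conj a * z := by rw [hzz, mul_one]
    _ = z * conj (a + conj a * z) := by simp only [map_add, map_mul, conj_conj]; ring

theorem dslope_zero_eq_conj_of_eq_mul_conj {G : ℂ → ℂ} (hG₀ : G 0 = 0) {z : ℂ} (hz : ‖z‖ = 1)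
    (hGz : G z = z * conj (G z)) : dslope G 0 z = conj (G z) := by
  have hz₀ : z ≠ 0 := norm_ne_zero_iff.1 (by rw [hz]; exact one_ne_zero)
  rw [dslope_of_ne _ hz₀, slope_def_field, hG₀, sub_zero, sub_zero]
  exact (div_eq_iff hz₀).2 (hGz.trans (mul_comm _ _))

theorem DiffContOnCl.eqOn_closedBall_zero_of_eq_mul_conj_on_sphere {G : ℂ → ℂ}
    (hG : DiffContOnCl ℂ G (ball 0 1)) (hG₀ : G 0 = 0)
    (hGb : ∀ z ∈ sphere (0 : ℂ) 1, G z = z * conj (G z)) :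
    EqOn G 0 (closedBall 0 1) := by
  have hcont : ContinuousOn G (sphere 0 1) :=
    hG.continuousOn.mono (by rw [closure_ball 0 one_ne_zero]; exact sphere_subset_closedBall)
  have hprod : EqOn (fun z ↦ G z * dslope G 0 z) (fun z ↦ ((‖G z‖ ^ 2 : ℝ) : ℂ)) (sphere 0 1) :=
    fun z hz ↦ by
      have hz' : ‖z‖ = 1 := by simpa using hz
      simp only [dslope_zero_eq_conj_of_eq_mul_conj hG₀ hz' (hGb z hz), mul_conj', ofReal_pow]
  have hmean : Real.circleAverage (fun z ↦ G z * dslope G 0 z) 0 1 = 0 := by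
    have hGH := hG.smul (hG.dslope_ball one_pos)
    rw [← abs_one] at hGH
    simpa [hG₀] using hGH.circleAverage
  have hsq : Real.circleAverage (fun z ↦ ‖G z‖ ^ 2) 0 1 = 0 := by
    have hint : CircleIntegrable (fun z ↦ ‖G z‖ ^ 2) 0 1 :=
      (hcont.norm.pow 2).circleIntegrable zero_le_one
    apply ofReal_injective
    rw [← ofRealCLM_apply, ← ofRealCLM.circleAverage_comp_comm hint, ofReal_zero]
    exact (circleAverage_congr_sphere (by rw [abs_one]; exact hprod.symm)).trans hmean
  have hsphere : EqOn G 0 (sphere 0 1) := fun z hz ↦ by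
    simpa using eqOn_sphere_zero_of_circleAverage_eq_zero (by rw [abs_one]; fun_prop)
      (fun _ _ ↦ by positivity) hsq (by rwa [abs_one])
  rw [← closure_ball (0 : ℂ) one_ne_zero]
  exact eqOn_closure_of_eqOn_frontier isBounded_ball hG diffContOnCl_const
    (by rwa [frontier_ball (0 : ℂ) one_ne_zero])

/-- **Holomorphic disks with boundary on the Möbius band are affine.**
Let `F` be holomorphic on the open unit disk and continuous on the closed disk.
If the boundary values satisfy `F(e^{iθ}) = e^{iθ} · conj(F(e^{iθ}))` for all `θ`,
then `F(z) = a₀ + conj(a₀) z` where `a₀ = F(0)`. -/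
theorem boundary_condition_forces_affine (F : ℂ → ℂ)
    (h1 : DifferentiableOn ℂ F (Metric.ball 0 1))
    (h2 : ContinuousOn F (Metric.closedBall 0 1))
    (hb : ∀ θ : ℝ,
      F (Complex.exp (θ * Complex.I)) =
        Complex.exp (θ * Complex.I) * (starRingEnd ℂ) (F (Complex.exp (θ * Complex.I)))) :
    ∀ z ∈ Metric.closedBall (0 : ℂ) 1, F z = F 0 + (starRingEnd ℂ) (F 0) * z := by
  set G : ℂ → ℂ := fun z ↦ F z - (F 0 + conj (F 0) * z) with hG_def
  have hG : DiffContOnCl ℂ G (ball 0 1) :=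
    ⟨h1.sub (by fun_prop), by rw [closure_ball (0 : ℂ) one_ne_zero]; fun_prop⟩
  have hGb : ∀ z ∈ sphere (0 : ℂ) 1, G z = z * conj (G z) := by
    intro z hz
    have hz' : ‖z‖ = 1 := by simpa using hz
    obtain ⟨θ, rfl⟩ := (norm_eq_one_iff z).1 hz'
    rw [hG_def, map_sub, mul_sub, ← hb θ, ← add_conj_mul_eq_mul_conj (F 0) hz']
  intro z hz
  exact sub_eq_zero.1 (hG.eqOn_closedBall_zero_of_eq_mul_conj_on_sphere (by simp [hG_def]) hGb hz)
end

section
/- If two torsion-free connections on a surface are related by ∇̂_u v = ∇_u v + du(u)v + du(v)u + h(u,v) grad_h u (conformal change of Levi-Civita connection) and also by ∇̂_u v = ∇_u v + β(u)v + β(v)u (projective change) for a 1-form β, then β = du and grad_h u = 0; hence u is locally constant. -/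
/-!
Putting `v = w` in the identity gives `‖v‖² • G = 2 (β - D)(v) • v`, so `G` is parallel to every
vector. In dimension at least two some nonzero `v` is orthogonal to `G`, which forces `G = 0`;
then `(β - D)(v) • v = 0` for every `v`, i.e. `β = D`.
-/

open RealInnerProductSpace Module

section

variable {E : Type*} [NormedAddCommGroup E] [InnerProductSpace ℝ E]

theorem exists_ne_zero_inner_eq_zero (hE : 2 ≤ finrank ℝ E) (G : E) :
    ∃ v ≠ 0, ⟪G, v⟫ = 0 := by
  have : FiniteDimensional ℝ E := Module.finite_of_finrank_pos (by omega)
  have hker : LinearMap.ker (innerₛₗ ℝ G) ≠ ⊥ :=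
    LinearMap.ker_ne_bot_of_finrank_lt (by rw [finrank_self]; omega)
  obtain ⟨v, hv, hv0⟩ := Submodule.exists_mem_ne_zero_of_ne_bot hker
  exact ⟨v, hv0, hv⟩

theorem eq_zero_of_forall_inner_self_smul_eq_smul (hE : 2 ≤ finrank ℝ E) {G : E}
    (hG : ∀ v : E, ∃ c : ℝ, ⟪v, v⟫ • G = c • v) : G = 0 := by
  obtain ⟨v, hv0, hGv⟩ := exists_ne_zero_inner_eq_zero hE G
  obtain ⟨c, hc⟩ := hG v
  have : ⟪v, v⟫ * ⟪G, G⟫ = 0 := by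
    rw [← real_inner_smul_right, hc, real_inner_smul_right, hGv, mul_zero]
  simpa [hv0] using this

theorem inner_self_smul_eq_of_projective_eq_conformal {β D : E →ₗ[ℝ] ℝ} {G : E}
    (h : ∀ v w : E, β v • w + β w • v = D v • w + D w • v + ⟪v, w⟫ • G) (v : E) :
    ⟪v, v⟫ • G = (2 * (β v - D v)) • v := by
  rw [eq_sub_of_add_eq' (h v v).symm]
  module

end

/-- **Conformal + projective change forces a constant conformal factor** (pointwise,
on a 2-dimensional tangent space).  If the difference tensor of two torsion-free
connections has both the conformal form `du(u)v + du(v)u + h(u,v)·grad u`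
(difference of Levi-Civita connections of `h` and `e^{2u}h` in dimension 2, where
`D = du` and `G = grad_h u` with `D v = ⟪G, v⟫`) and the projective form
`β(u)v + β(v)u`, then `β = du` and `grad_h u = 0` (so `du = 0`); hence `u` is
locally constant. -/
theorem conformal_and_projective_implies_constant
    {E : Type*} [NormedAddCommGroup E] [InnerProductSpace ℝ E]
    (hdim : Module.finrank ℝ E = 2)
    (β D : E →ₗ[ℝ] ℝ) (G : E)
    (hgrad : ∀ v, D v = ⟪G, v⟫)
    (h : ∀ v w : E, β v • w + β w • v = D v • w + D w • v + ⟪v, w⟫ • G) :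
    β = D ∧ D = 0 ∧ G = 0 := by
  have hdiag := inner_self_smul_eq_of_projective_eq_conformal h
  have hG : G = 0 := eq_zero_of_forall_inner_self_smul_eq_smul hdim.ge fun v => ⟨_, hdiag v⟩
  refine ⟨LinearMap.ext fun v => ?_, LinearMap.ext fun v => by simp [hgrad, hG], hG⟩
  have : (2 * (β v - D v)) • v = 0 := by rw [← hdiag, hG, smul_zero]
  rcases smul_eq_zero.mp this with hβD | rfl
  · linarith
  · simp
end
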